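/- Let f : F₂' → ℤ be a signed-area homomorphism. Let z ∈ F₂ and set k = exp_x(z) and l = exp_y(z), so that y^{-l} x^{-k} z ∈ F₂'. Then z is a product of cubes in F₂ — i.e. z = u₁³ u₂³ ⋯ u_s³ for some s ≥ 1 and u₁, …, u_s ∈ F₂ — if and only if 3 divides k, 3 divides l, and 3 divides f(y^{-l} x^{-k} z). -/

import Mathlib

/-
Let `N` be the normal subgroup of `F₂` generated by cubes and `φ : F₂ → H(𝔽₃)` the map to the
Heisenberg group over `𝔽₃` sending `x, y` to the standard generators. As `H(𝔽₃)` has exponent 3,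
`N ≤ ker φ`. Conversely, in a group of exponent 3 every `a` commutes with `[a, b]`, so in `F₂ ⧸ N`
the commutator `[x, y]` is central and every element has the form `[x, y]^m x^a y^b`; such a word
lies in `N` as soon as its image `(a, b, m + ab)` under `φ` is trivial. Hence `N = ker φ`.
On `F₂'` the `c`-coordinate of the map to the Heisenberg group over any commutative ring is a
homomorphism sending every conjugate of `[x, y]` to `1`; these conjugates generate `F₂'`, so it
agrees with `f` (cast into the ring), and `φ (x^k y^l w) = (k, l, kl + f w)`.
-/

/-- The total exponent of `x` in a word of the free group on `{x, y}`. -/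
def expx (w : FreeGroup (Fin 2)) : ℤ :=
  Multiplicative.toAdd
    (FreeGroup.lift (fun i => Multiplicative.ofAdd (if i = 0 then (1 : ℤ) else 0)) w)

/-- The total exponent of `y` in a word of the free group on `{x, y}`. -/
def expy (w : FreeGroup (Fin 2)) : ℤ :=
  Multiplicative.toAdd
    (FreeGroup.lift (fun i => Multiplicative.ofAdd (if i = 1 then (1 : ℤ) else 0)) w)

open scoped commutatorElement

open Subgroup

section ExponentThree

variable {G : Type*} [Group G]

theorem commute_conj_of_pow_three (h3 : ∀ g : G, g ^ 3 = 1) (a b : G) :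
    Commute a (b⁻¹ * a * b) := by
  have mul_mul_eq (u v : G) : u * v * u = v⁻¹ * u⁻¹ * v⁻¹ := by
    calc u * v * u = (u * v) ^ 3 * (v⁻¹ * u⁻¹ * v⁻¹) := by
          rw [pow_succ, pow_succ, pow_one]; group
      _ = v⁻¹ * u⁻¹ * v⁻¹ := by rw [h3, one_mul]
  have mul_self_eq (u : G) : u * u = u⁻¹ := by
    calc u * u = u ^ 3 * u⁻¹ := by rw [pow_succ, pow_succ, pow_one]; group
      _ = u⁻¹ := by rw [h3, one_mul]
  calc a * (b⁻¹ * a * b) = a * b⁻¹ * a * b := by group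
    _ = b * a⁻¹ * (b * b) := by rw [mul_mul_eq a b⁻¹]; group
    _ = (b⁻¹ * b⁻¹) * a⁻¹ * b⁻¹ := by rw [mul_self_eq b, mul_self_eq b⁻¹, inv_inv]
    _ = b⁻¹ * (a * b * a) := by rw [mul_mul_eq a b]; group
    _ = b⁻¹ * a * b * a := by group

theorem commute_commutatorElement_left_of_pow_three (h3 : ∀ g : G, g ^ 3 = 1) (a b : G) :
    Commute a ⁅a, b⁆ := by
  rw [show ⁅a, b⁆ = a * (b⁻¹⁻¹ * a * b⁻¹)⁻¹ by rw [commutatorElement_def]; group]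
  exact (Commute.refl a).mul_right (commute_conj_of_pow_three h3 a b⁻¹).inv_right

theorem commute_commutatorElement_right_of_pow_three (h3 : ∀ g : G, g ^ 3 = 1) (a b : G) :
    Commute b ⁅a, b⁆ := by
  rw [← commutatorElement_inv]
  exact (commute_commutatorElement_left_of_pow_three h3 b a).inv_right

end ExponentThree

section NormalForm

variable {G : Type*} [Group G]

theorem exists_eq_commutatorElement_zpow_mul_zpow_mul_zpow {X Y : G}
    (hX : Commute X ⁅X, Y⁆) (hY : Commute Y ⁅X, Y⁆) {g : G} (hg : g ∈ closure {X, Y}) :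
    ∃ m a b : ℤ, g = ⁅X, Y⁆ ^ m * X ^ a * Y ^ b := by
  set C := ⁅X, Y⁆
  have conj_Y : SemiconjBy Y X (C⁻¹ * X) := by
    simp only [SemiconjBy, C, commutatorElement_def]; group
  have conj_Y_inv : SemiconjBy Y⁻¹ X (C * X) := by
    calc Y⁻¹ * X = Y⁻¹ * (C * (C⁻¹ * X * Y)) * Y⁻¹ := by group
      _ = Y⁻¹ * (C * Y) * X * Y⁻¹ := by rw [← conj_Y.eq]; group
      _ = C * X * Y⁻¹ := by rw [← hY.eq]; group
  have Y_mul (a : ℤ) : Y * X ^ a = C ^ (-a) * X ^ a * Y := by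
    rw [(conj_Y.zpow_right a).eq, hX.inv_right.symm.mul_zpow, inv_zpow']
  have Y_inv_mul (a : ℤ) : Y⁻¹ * X ^ a = C ^ a * X ^ a * Y⁻¹ := by
    rw [(conj_Y_inv.zpow_right a).eq, hX.symm.mul_zpow]
  induction hg using closure_induction_left with
  | one => exact ⟨0, 0, 0, by group⟩
  | mul_left x hx g _ ih =>
    obtain ⟨m, a, b, rfl⟩ := ih
    rcases hx with rfl | rfl
    · refine ⟨m, a + 1, b, ?_⟩
      calc x * (C ^ m * x ^ a * Y ^ b) = (x * C ^ m) * x ^ a * Y ^ b := by group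
        _ = C ^ m * x ^ (a + 1) * Y ^ b := by rw [(hX.zpow_right m).eq]; group
    · refine ⟨m - a, a, b + 1, ?_⟩
      calc x * (C ^ m * X ^ a * x ^ b) = (x * C ^ m) * X ^ a * x ^ b := by group
        _ = C ^ m * (x * X ^ a) * x ^ b := by rw [(hY.zpow_right m).eq]; group
        _ = C ^ (m - a) * X ^ a * x ^ (b + 1) := by rw [Y_mul]; group
  | inv_mul_cancel x hx g _ ih =>
    obtain ⟨m, a, b, rfl⟩ := ih
    rcases hx with rfl | rfl
    · refine ⟨m, a - 1, b, ?_⟩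
      calc x⁻¹ * (C ^ m * x ^ a * Y ^ b) = (x⁻¹ * C ^ m) * x ^ a * Y ^ b := by group
        _ = C ^ m * x ^ (a - 1) * Y ^ b := by rw [(hX.inv_left.zpow_right m).eq]; group
    · refine ⟨m + a, a, b - 1, ?_⟩
      calc x⁻¹ * (C ^ m * X ^ a * x ^ b) = (x⁻¹ * C ^ m) * X ^ a * x ^ b := by group
        _ = C ^ m * (x⁻¹ * X ^ a) * x ^ b := by rw [(hY.inv_left.zpow_right m).eq]; group
        _ = C ^ (m + a) * X ^ a * x ^ (b - 1) := by rw [Y_inv_mul]; group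

end NormalForm

theorem MonoidHom.eq_of_eqOn_of_eq_closure {G M : Type*} [Group G] [Monoid M] {H : Subgroup G}
    {s : Set G} (hH : H = closure s) {f g : H →* M} (h : ∀ w : H, (w : G) ∈ s → f w = g w) :
    f = g := by
  subst hH
  exact eq_of_eqOn_dense closure_closure_coe_preimage h

section PowerSubgroup

variable {G : Type*} [Group G] {n : ℕ}

theorem mem_normalClosure_range_pow_iff {z : G} :
    z ∈ normalClosure (Set.range (· ^ n)) ↔
      ∃ L : List G, L ≠ [] ∧ z = (L.map (· ^ n)).prod := by
  constructor
  · intro hz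
    induction hz using closure_induction with
    | mem x hx =>
      obtain ⟨_, ⟨u, rfl⟩, hconj⟩ := Group.mem_conjugatesOfSet_iff.1 hx
      obtain ⟨c, rfl⟩ := isConj_iff.1 hconj
      exact ⟨[c * u * c⁻¹], by simp, by simp [conj_pow]⟩
    | one => exact ⟨[1], by simp, by simp⟩
    | mul x y _ _ ihx ihy =>
      obtain ⟨L, hL, rfl⟩ := ihx
      obtain ⟨L', -, rfl⟩ := ihy
      exact ⟨L ++ L', by simp [hL], by simp⟩
    | inv x _ ih =>
      obtain ⟨L, hL, rfl⟩ := ih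
      exact ⟨(L.map (·⁻¹)).reverse, by simpa using hL,
        by simp [List.prod_inv_reverse, List.map_reverse, Function.comp_def, inv_pow]⟩
  · rintro ⟨L, -, rfl⟩
    refine list_prod_mem fun g hg => ?_
    obtain ⟨u, -, rfl⟩ := List.mem_map.1 hg
    exact subset_normalClosure ⟨u, rfl⟩

theorem zpow_mem_normalClosure_range_pow (g : G) {k : ℤ} (hk : (n : ℤ) ∣ k) :
    g ^ k ∈ normalClosure (Set.range (· ^ n)) := by
  obtain ⟨t, rfl⟩ := hk
  rw [mul_comm, zpow_mul, zpow_natCast]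
  exact subset_normalClosure ⟨g ^ t, rfl⟩

theorem QuotientGroup.pow_eq_one_of_normalClosure_range_pow
    (q : G ⧸ normalClosure (Set.range (· ^ n))) : q ^ n = 1 := by
  induction q using QuotientGroup.induction_on with
  | H g =>
    rw [← QuotientGroup.mk_pow, QuotientGroup.eq_one_iff]
    exact subset_normalClosure ⟨g, rfl⟩

end PowerSubgroup

section FreeGroup

local notation "F₂" => FreeGroup (Fin 2)

theorem FreeGroup.closure_pair_eq_top_of_surjective {Q : Type*} [Group Q]
    {ψ : F₂ →* Q} (hψ : Function.Surjective ψ) :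
    closure {ψ (FreeGroup.of 0), ψ (FreeGroup.of 1)} = ⊤ := by
  have hrange : Set.range (ψ ∘ FreeGroup.of) = {ψ (FreeGroup.of 0), ψ (FreeGroup.of 1)} := by
    ext; simp [Fin.exists_fin_two, eq_comm]
  rw [← hrange, Set.range_comp, ← MonoidHom.map_closure, FreeGroup.closure_range_of,
    ← MonoidHom.range_eq_map, MonoidHom.range_eq_top.2 hψ]

theorem FreeGroup.commutator_eq_normalClosure_commutatorElement :
    commutator F₂ = normalClosure {⁅FreeGroup.of (0 : Fin 2), FreeGroup.of (1 : Fin 2)⁆} := by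
  set K := normalClosure {⁅FreeGroup.of (0 : Fin 2), FreeGroup.of (1 : Fin 2)⁆}
  refine le_antisymm ?_ (normalClosure_le_normal ?_)
  · rw [← Subgroup.Normal.quotient_commutative_iff_commutator_le]
    set X := QuotientGroup.mk' K (FreeGroup.of 0)
    set Y := QuotientGroup.mk' K (FreeGroup.of 1)
    have hXY : X * Y = Y * X := by
      rw [← commutatorElement_eq_one_iff_mul_comm, ← map_commutatorElement,
        QuotientGroup.mk'_apply, QuotientGroup.eq_one_iff]
      exact subset_normalClosure (Set.mem_singleton _)
    have := isMulCommutative_closure (k := {X, Y}) <| by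
      rintro _ (rfl | rfl) _ (rfl | rfl) <;> first | rfl | exact hXY | exact hXY.symm
    rw [FreeGroup.closure_pair_eq_top_of_surjective (QuotientGroup.mk'_surjective K)] at this
    exact ⟨⟨fun p q => congrArg Subtype.val
      (mul_comm' (⟨p, mem_top p⟩ : (⊤ : Subgroup _)) ⟨q, mem_top q⟩)⟩⟩
  · rintro _ rfl
    rw [SetLike.mem_coe, _root_.commutator_def]
    exact commutator_mem_commutator (mem_top _) (mem_top _)

theorem FreeGroup.exists_inv_mul_mem_normalClosure_cubes (z : F₂) :
    ∃ m a b : ℤ, z⁻¹ * (⁅FreeGroup.of (0 : Fin 2), FreeGroup.of (1 : Fin 2)⁆ ^ m *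
      FreeGroup.of 0 ^ a * FreeGroup.of 1 ^ b) ∈ normalClosure (Set.range (· ^ 3)) := by
  set N : Subgroup F₂ := normalClosure (Set.range (· ^ 3))
  have h3 := QuotientGroup.pow_eq_one_of_normalClosure_range_pow (G := F₂) (n := 3)
  obtain ⟨m, a, b, hmab⟩ := exists_eq_commutatorElement_zpow_mul_zpow_mul_zpow
    (commute_commutatorElement_left_of_pow_three h3 _ _)
    (commute_commutatorElement_right_of_pow_three h3 _ _)
    ((FreeGroup.closure_pair_eq_top_of_surjective (QuotientGroup.mk'_surjective N)).symm ▸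
      mem_top (QuotientGroup.mk' N z))
  refine ⟨m, a, b, QuotientGroup.eq.1 ?_⟩
  change QuotientGroup.mk' N z = QuotientGroup.mk' N _
  rw [hmab]
  simp only [_root_.map_mul, map_zpow, map_commutatorElement]

end FreeGroup

/-- The Heisenberg group over `R`: `⟨a, b, c⟩` is the unitriangular matrix
`[[1, a, c], [0, 1, b], [0, 0, 1]]`. -/
@[ext] structure Heis (R : Type*) [CommRing R] where
  a : R
  b : R
  c : R

namespace Heis

variable {R : Type*} [CommRing R]

instance : Mul (Heis R) := ⟨fun g h => ⟨g.a + h.a, g.b + h.b, g.c + h.c + g.a * h.b⟩⟩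
instance : One (Heis R) := ⟨⟨0, 0, 0⟩⟩
instance : Inv (Heis R) := ⟨fun g => ⟨-g.a, -g.b, -g.c + g.a * g.b⟩⟩

@[simp] lemma mul_a (g h : Heis R) : (g * h).a = g.a + h.a := rfl
@[simp] lemma mul_b (g h : Heis R) : (g * h).b = g.b + h.b := rfl
@[simp] lemma mul_c (g h : Heis R) : (g * h).c = g.c + h.c + g.a * h.b := rfl
@[simp] lemma one_a : (1 : Heis R).a = 0 := rfl
@[simp] lemma one_b : (1 : Heis R).b = 0 := rfl
@[simp] lemma one_c : (1 : Heis R).c = 0 := rfl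
@[simp] lemma inv_a (g : Heis R) : g⁻¹.a = -g.a := rfl
@[simp] lemma inv_b (g : Heis R) : g⁻¹.b = -g.b := rfl
@[simp] lemma inv_c (g : Heis R) : g⁻¹.c = -g.c + g.a * g.b := rfl

instance : Group (Heis R) where
  mul_assoc g h k := by ext <;> simp <;> ring
  one_mul g := by ext <;> simp
  mul_one g := by ext <;> simp
  inv_mul_cancel g := by ext <;> simp

lemma mk_eq_one_iff {a b c : R} : (⟨a, b, c⟩ : Heis R) = 1 ↔ a = 0 ∧ b = 0 ∧ c = 0 := by
  simp [Heis.ext_iff]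

lemma zpow_of_a_mul_b_eq_zero {g : Heis R} (hg : g.a * g.b = 0) (n : ℤ) :
    g ^ n = ⟨n * g.a, n * g.b, n * g.c⟩ := by
  induction n using Int.induction_on with
  | zero => ext <;> simp
  | succ n ih => rw [zpow_add_one, ih]; ext <;> simp <;> grind
  | pred n ih => rw [zpow_sub_one, ih]; ext <;> simp <;> grind

lemma conj_mk_zero_zero (g : Heis R) (t : R) : g * ⟨0, 0, t⟩ * g⁻¹ = ⟨0, 0, t⟩ := by
  ext <;> simp; ring

lemma pow_three_eq_one (h3 : (3 : R) = 0) (g : Heis R) : g ^ 3 = 1 := by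
  rw [pow_succ, pow_succ, pow_one]
  ext <;> simp <;> grind

def toProd : Heis R →* Multiplicative (R × R) where
  toFun g := .ofAdd (g.a, g.b)
  map_one' := rfl
  map_mul' _ _ := rfl

lemma a_eq_zero_and_b_eq_zero_of_mem_commutator {G : Type*} [Group G] (ψ : G →* Heis R)
    {w : G} (hw : w ∈ commutator G) : (ψ w).a = 0 ∧ (ψ w).b = 0 := by
  have := Abelianization.commutator_subset_ker (toProd.comp ψ) hw
  simpa [toProd, Prod.ext_iff] using this

variable (R) in
def ofFreeGroup : FreeGroup (Fin 2) →* Heis R := FreeGroup.lift ![⟨1, 0, 0⟩, ⟨0, 1, 0⟩]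

@[simp] lemma ofFreeGroup_of_zero : ofFreeGroup R (FreeGroup.of 0) = ⟨1, 0, 0⟩ := by
  simp [ofFreeGroup]

@[simp] lemma ofFreeGroup_of_one : ofFreeGroup R (FreeGroup.of 1) = ⟨0, 1, 0⟩ := by
  simp [ofFreeGroup]

lemma ofFreeGroup_commutatorElement :
    ofFreeGroup R ⁅FreeGroup.of (0 : Fin 2), FreeGroup.of (1 : Fin 2)⁆ = ⟨0, 0, 1⟩ := by
  rw [map_commutatorElement, commutatorElement_def]
  ext <;> simp

@[simp] lemma ofFreeGroup_of_zero_zpow (k : ℤ) :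
    ofFreeGroup R (FreeGroup.of 0 ^ k) = ⟨k, 0, 0⟩ := by
  rw [map_zpow, ofFreeGroup_of_zero, zpow_of_a_mul_b_eq_zero (by simp)]
  ext <;> simp

@[simp] lemma ofFreeGroup_of_one_zpow (k : ℤ) :
    ofFreeGroup R (FreeGroup.of 1 ^ k) = ⟨0, k, 0⟩ := by
  rw [map_zpow, ofFreeGroup_of_one, zpow_of_a_mul_b_eq_zero (by simp)]
  ext <;> simp

@[simp] lemma ofFreeGroup_commutatorElement_zpow (m : ℤ) :
    ofFreeGroup R (⁅FreeGroup.of (0 : Fin 2), FreeGroup.of (1 : Fin 2)⁆ ^ m) = ⟨0, 0, m⟩ := by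
  rw [map_zpow, ofFreeGroup_commutatorElement, zpow_of_a_mul_b_eq_zero (by simp)]
  ext <;> simp

lemma ofFreeGroup_eq_of_mem_commutator {w : FreeGroup (Fin 2)}
    (hw : w ∈ commutator (FreeGroup (Fin 2))) : ofFreeGroup R w = ⟨0, 0, (ofFreeGroup R w).c⟩ := by
  obtain ⟨ha, hb⟩ := a_eq_zero_and_b_eq_zero_of_mem_commutator (ofFreeGroup R) hw
  ext <;> simp [ha, hb]

end Heis

theorem Heis.intCast_toAdd_eq_ofFreeGroup_c (R : Type*) [CommRing R]
    (f : ↥(commutator (FreeGroup (Fin 2))) →* Multiplicative ℤ)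
    (hf : ∀ (u : FreeGroup (Fin 2)) (w : ↥(commutator (FreeGroup (Fin 2)))),
      (w : FreeGroup (Fin 2)) =
          u * ⁅FreeGroup.of (0 : Fin 2), FreeGroup.of (1 : Fin 2)⁆ * u⁻¹ →
      f w = Multiplicative.ofAdd (1 : ℤ))
    (w : ↥(commutator (FreeGroup (Fin 2)))) :
    ((Multiplicative.toAdd (f w) : ℤ) : R) = (Heis.ofFreeGroup R w).c := by
  let area : ↥(commutator (FreeGroup (Fin 2))) →* Multiplicative R :=
    { toFun v := .ofAdd (Heis.ofFreeGroup R v).c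
      map_one' := by simp
      map_mul' v v' := by
        rw [Subgroup.coe_mul, map_mul, Heis.mul_c,
          (Heis.a_eq_zero_and_b_eq_zero_of_mem_commutator _ v.2).1, zero_mul, add_zero]
        rfl }
  have : (AddMonoidHom.toMultiplicative (Int.castAddHom R)).comp f = area := by
    refine MonoidHom.eq_of_eqOn_of_eq_closure
      FreeGroup.commutator_eq_normalClosure_commutatorElement fun v hv => ?_
    obtain ⟨_, rfl, hconj⟩ := Group.mem_conjugatesOfSet_iff.1 hv
    obtain ⟨u, hu⟩ := isConj_iff.1 hconj
    have hcentral : Heis.ofFreeGroup R v = ⟨0, 0, 1⟩ := by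
      rw [← hu, map_mul, map_mul, map_inv, Heis.ofFreeGroup_commutatorElement,
        Heis.conj_mk_zero_zero]
    simp [area, hf u v hu.symm, hcentral]
  exact congrArg Multiplicative.toAdd (DFunLike.congr_fun this w)

theorem mem_normalClosure_cubes_iff_ofFreeGroup_eq_one (z : FreeGroup (Fin 2)) :
    z ∈ normalClosure (Set.range (· ^ 3)) ↔ Heis.ofFreeGroup (ZMod 3) z = 1 := by
  set N : Subgroup (FreeGroup (Fin 2)) := normalClosure (Set.range (· ^ 3))
  have hN : N ≤ (Heis.ofFreeGroup (ZMod 3)).ker := normalClosure_le_normal <| by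
    rintro _ ⟨u, rfl⟩
    rw [SetLike.mem_coe, MonoidHom.mem_ker, map_pow]
    exact Heis.pow_three_eq_one (by decide) _
  refine ⟨fun hz => hN hz, fun hz => ?_⟩
  obtain ⟨m, a, b, hzv⟩ := FreeGroup.exists_inv_mul_mem_normalClosure_cubes z
  set v := ⁅FreeGroup.of (0 : Fin 2), FreeGroup.of (1 : Fin 2)⁆ ^ m * FreeGroup.of 0 ^ a *
    FreeGroup.of 1 ^ b
  have hv : Heis.ofFreeGroup (ZMod 3) v = 1 := by simpa [hz] using hN hzv
  obtain ⟨ha, hb, hm⟩ : (a : ZMod 3) = 0 ∧ (b : ZMod 3) = 0 ∧ (m : ZMod 3) + a * b = 0 := by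
    simpa [v, Heis.ext_iff] using hv
  rw [ha, zero_mul, add_zero] at hm
  simp only [ZMod.intCast_zmod_eq_zero_iff_dvd] at ha hb hm
  have hvN : v ∈ N := mul_mem (mul_mem (zpow_mem_normalClosure_range_pow _ hm)
    (zpow_mem_normalClosure_range_pow _ ha)) (zpow_mem_normalClosure_range_pow _ hb)
  simpa using mul_mem hvN (inv_mem hzv)

theorem stmt_14
    (f : ↥(commutator (FreeGroup (Fin 2))) →* Multiplicative ℤ)
    (hf : ∀ (u : FreeGroup (Fin 2)) (w : ↥(commutator (FreeGroup (Fin 2)))),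
      (w : FreeGroup (Fin 2)) =
          u * ⁅FreeGroup.of (0 : Fin 2), FreeGroup.of (1 : Fin 2)⁆ * u⁻¹ →
      f w = Multiplicative.ofAdd (1 : ℤ))
    (z : FreeGroup (Fin 2))
    (w : ↥(commutator (FreeGroup (Fin 2))))
    (hw : (w : FreeGroup (Fin 2)) =
      FreeGroup.of (1 : Fin 2) ^ (-(expy z)) * FreeGroup.of (0 : Fin 2) ^ (-(expx z)) * z) :
    (∃ L : List (FreeGroup (Fin 2)), L ≠ [] ∧ z = (L.map (fun u => u ^ 3)).prod) ↔
      (3 ∣ expx z ∧ 3 ∣ expy z ∧ (3 : ℤ) ∣ Multiplicative.toAdd (f w)) := by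
  set k := expx z
  set l := expy z
  have hz : z = FreeGroup.of (0 : Fin 2) ^ k * FreeGroup.of (1 : Fin 2) ^ l * ↑w := by
    rw [hw]; group
  have hφz : Heis.ofFreeGroup (ZMod 3) z =
      ⟨k, l, k * l + (Multiplicative.toAdd (f w) : ℤ)⟩ := by
    rw [hz, map_mul, map_mul, Heis.ofFreeGroup_eq_of_mem_commutator w.2,
      ← Heis.intCast_toAdd_eq_ofFreeGroup_c _ f hf]
    ext <;> simp
  rw [← mem_normalClosure_range_pow_iff, mem_normalClosure_cubes_iff_ofFreeGroup_eq_one, hφz,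
    Heis.mk_eq_one_iff]
  have dvd_iff (n : ℤ) : (3 : ℤ) ∣ n ↔ (n : ZMod 3) = 0 :=
    (ZMod.intCast_zmod_eq_zero_iff_dvd n 3).symm
  simp only [dvd_iff]
  refine and_congr_right fun hk => and_congr_right fun _ => ?_
  rw [hk, zero_mul, zero_add]
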